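/- arXiv:1707.08756 — 5 statements merged into one kernel-verified Lean document; each statement's English description precedes it below -/
import Mathlib

section
/- Marginalization distributes over combination in the algebra of relational structures: for relational structures s, t with dom(s) = X, we have (s ⊗ t) ↓ X = s ⊗ (t ↓ X). -/
/-- A relational structure over variables of type `ι`: a domain of variables and a
set of (total representatives of) assignments, cylindrical over the domain. -/
structure RelStr (ι : Type*) where
  dom : Set ι
  A : Set (ι → Bool)
  cyl : ∀ u v : ι → Bool, (∀ x ∈ dom, u x = v x) → u ∈ A → v ∈ A

namespace RelStr
variable {ι : Type*}

/-- Combination (join) of relational structures. -/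
def comb (s t : RelStr ι) : RelStr ι where
  dom := s.dom ∪ t.dom
  A := s.A ∩ t.A
  cyl := fun u v h hu =>
    ⟨s.cyl u v (fun x hx => h x (Or.inl hx)) hu.1,
     t.cyl u v (fun x hx => h x (Or.inr hx)) hu.2⟩

/-- Marginalization (projection) of a relational structure onto a set of variables. -/
def marg (s : RelStr ι) (X : Set ι) : RelStr ι where
  dom := s.dom ∩ X
  A := {u | ∃ a ∈ s.A, ∀ x ∈ s.dom ∩ X, u x = a x}
  cyl := fun u v h hu => by
    obtain ⟨a, ha, hag⟩ := hu
    exact ⟨a, ha, fun x hx => (h x hx).symm.trans (hag x hx)⟩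

/-- The full relational structure `e_X` on variables `X`. -/
def full (X : Set ι) : RelStr ι where
  dom := X
  A := Set.univ
  cyl := fun _ _ _ _ => trivial

/-- Variable elimination. -/
def elim (s : RelStr ι) (x : ι) : RelStr ι := s.marg (s.dom \ {x})

/-- Combination of a finite family (list) of relational structures. -/
def bigComb (l : List (RelStr ι)) : RelStr ι := l.foldr comb (full ∅)

end RelStr

lemma RelStr.ext' {ι : Type*} {s t : RelStr ι} (h1 : s.dom = t.dom) (h2 : s.A = t.A) :
    s = t := by
  cases s; cases t; simp_all

open RelStr in
/-- VA5: marginalization distributes over combination, for relational structures. -/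
theorem relstr_marg_distrib {ι : Type*} (s t : RelStr ι) (X : Set ι)
    (hs : s.dom = X) : marg (comb s t) X = comb s (marg t X) := by
  subst hs
  have hdom : (s.dom ∪ t.dom) ∩ s.dom = s.dom ∪ (t.dom ∩ s.dom) := by
    ext x; simp [Set.mem_inter_iff, Set.mem_union]; tauto
  have hA : (marg (comb s t) s.dom).A = (comb s (marg t s.dom)).A := by
    ext u
    simp only [marg, comb, Set.mem_setOf_eq, Set.mem_inter_iff]
    constructor
    · rintro ⟨a, ⟨has, hat⟩, hag⟩
      have hagX : ∀ x ∈ s.dom, u x = a x := fun x hx =>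
        hag x ⟨Or.inl hx, hx⟩
      refine ⟨s.cyl a u (fun x hx => (hagX x hx).symm) has, a, hat, ?_⟩
      exact fun x hx => hag x ⟨Or.inr hx.1, hx.2⟩
    · rintro ⟨hus, a, hat, hag⟩
      classical
      refine ⟨fun x => if x ∈ t.dom then a x else u x, ⟨?_, ?_⟩, ?_⟩
      · exact s.cyl u _ (fun x hx => by by_cases h : x ∈ t.dom <;> simp [h] <;>
          exact (hag x ⟨h, hx⟩)) hus
      · exact t.cyl a _ (fun x hx => by simp [hx]) hat
      · intro x hx
        by_cases h : x ∈ t.dom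
        · simp [h]; exact hag x ⟨h, hx.2⟩
        · simp [h]
  have hd : (marg (comb s t) s.dom).dom = (comb s (marg t s.dom)).dom := by
    simpa [marg, comb] using hdom
  exact RelStr.ext' hd hA
end

section
/- Fusion step correctness in a valuation algebra: let S = S₊ ∪ S₋ be a finite set of valuations partitioned so that x ∈ dom(s) for all s ∈ S₊ and x ∉ dom(s) for all s ∈ S₋. Then ((⊗S)^{-x}) = ((⊗S₊)^{-x}) ⊗ (⊗S₋), i.e., eliminating variable x from the combination of S equals combining the x-eliminated combination of S₊ with the combination of S₋. -/
namespace RelStr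
variable {ι : Type*}

theorem ext'_s6 {s t : RelStr ι} (hd : s.dom = t.dom) (hA : s.A = t.A) : s = t := by
  cases s; cases t; simp_all

theorem comb_assoc (s t u : RelStr ι) : comb (comb s t) u = comb s (comb t u) :=
  ext'_s6 (Set.union_assoc _ _ _) (Set.inter_assoc _ _ _)

theorem full_comb (t : RelStr ι) : comb (full ∅) t = t :=
  ext'_s6 (Set.empty_union _) (Set.univ_inter _)

theorem bigComb_append (l₁ l₂ : List (RelStr ι)) :
    bigComb (l₁ ++ l₂) = comb (bigComb l₁) (bigComb l₂) := by
  induction l₁ with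
  | nil => simp [bigComb, full_comb]
  | cons a l ih =>
      simp only [bigComb, List.foldr_cons, List.foldr_append] at *
      rw [ih, comb_assoc]

theorem elim_comb (x : ι) (P M : RelStr ι) (hx : x ∉ M.dom) :
    elim (comb P M) x = comb (elim P x) M := by
  have hdom : (P.dom ∪ M.dom) \ {x} = (P.dom ∩ (P.dom \ {x})) ∪ M.dom := by
    rw [Set.inter_eq_right.mpr (Set.diff_subset)]
    ext y
    simp only [Set.mem_diff, Set.mem_union, Set.mem_singleton_iff]
    constructor
    · rintro ⟨h | h, hne⟩
      exacts [Or.inl ⟨h, hne⟩, Or.inr h]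
    · rintro (⟨h, hne⟩ | h)
      exacts [⟨Or.inl h, hne⟩, ⟨Or.inr h, fun e => hx (e ▸ h)⟩]
  refine ext'_s6 ?_ ?_
  · show (P.dom ∪ M.dom) ∩ ((P.dom ∪ M.dom) \ {x}) = _
    rw [Set.inter_eq_right.mpr (Set.diff_subset)]
    show _ = (P.dom ∩ (P.dom \ {x})) ∪ M.dom
    rw [Set.inter_eq_right.mpr (Set.diff_subset)] at hdom ⊢
    ext y
    simp only [Set.mem_diff, Set.mem_union, Set.mem_singleton_iff]
    constructor
    · rintro ⟨h | h, hne⟩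
      exacts [Or.inl ⟨h, hne⟩, Or.inr h]
    · rintro (⟨h, hne⟩ | h)
      exacts [⟨Or.inl h, hne⟩, ⟨Or.inr h, fun e => hx (e ▸ h)⟩]
  · ext u
    constructor
    · rintro ⟨a, ⟨haP, haM⟩, hag⟩
      refine ⟨⟨a, haP, fun y hy => hag y ⟨Or.inl hy.1, Or.inl hy.1, hy.2.2⟩⟩,
        M.cyl a u (fun y hy =>
          (hag y ⟨Or.inr hy, Or.inr hy, fun e => hx (e ▸ hy)⟩).symm) haM⟩
    · rintro ⟨⟨a, haP, hag⟩, huM⟩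
      classical
      refine ⟨fun y => if y = x then a y else u y, ⟨?_, ?_⟩, fun y hy => ?_⟩
      · refine P.cyl a _ (fun y hyP => ?_) haP
        by_cases hyx : y = x
        · simp [hyx]
        · simpa [hyx] using (hag y ⟨hyP, hyP, hyx⟩).symm
      · exact M.cyl u _ (fun y hy => (if_neg (fun e : y = x => hx (e ▸ hy))).symm) huM
      · exact (if_neg (fun e : y = x => hy.2.2 e)).symm

theorem notMem_dom_bigComb (x : ι) (l : List (RelStr ι)) (h : ∀ s ∈ l, x ∉ s.dom) :
    x ∉ (bigComb l).dom := by
  induction l with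
  | nil => simp [bigComb, full]
  | cons a l ih =>
      rintro (h1 | h2)
      · exact h a (by simp) h1
      · exact ih (fun s hs => h s (by simp [hs])) h2

end RelStr

open RelStr in
/-- Correctness of a fusion step: if `S = S₊ ∪ S₋` with `x` in the domain of every
valuation in `S₊` and in no domain of a valuation in `S₋`, then
`(⊗S)^{-x} = ((⊗S₊)^{-x}) ⊗ (⊗S₋)`. -/
theorem relstr_fusion_step {ι : Type*} (x : ι) (Sp Sm : List (RelStr ι))
    (hp : ∀ s ∈ Sp, x ∈ s.dom) (hm : ∀ s ∈ Sm, x ∉ s.dom) :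
    elim (bigComb (Sp ++ Sm)) x = comb (elim (bigComb Sp) x) (bigComb Sm) := by
  rw [bigComb_append, elim_comb x _ _ (notMem_dom_bigComb x Sm hm)]
end

section
/- Relevance-function preservation theorem: if κ is a relevance function for formula φ with respect to epistemic variable structure 𝓜 = (A, O, V), and X is a set of variables with κ(φ) ⊆ X ⊆ V, then for all worlds w ∈ A, 𝓜, w ⊨ φ iff 𝓜 ↓ X, w|X ⊨ φ. -/
/-- Formulas of epistemic logic: atoms, negation, conjunction and knowledge
operators `K_i` for agents `i : α`. -/
inductive EForm (ι α : Type*) where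
  | atom : ι → EForm ι α
  | neg : EForm ι α → EForm ι α
  | conj : EForm ι α → EForm ι α → EForm ι α
  | know : α → EForm ι α → EForm ι α

/-- An epistemic variable structure `𝓜 = (A, O, V)`: a set of worlds `A`
(total representatives of assignments to `V`, cylindrical over `V`) and a set
`O i ⊆ V` of observable variables for each agent `i`. -/
structure EVS (ι α : Type*) where
  V : Set ι
  A : Set (ι → Bool)
  O : α → Set ι
  O_sub : ∀ i, O i ⊆ V
  cyl : ∀ u v : ι → Bool, (∀ x ∈ V, u x = v x) → u ∈ A → v ∈ A

variable {ι α : Type*}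

/-- Satisfaction `𝓜, w ⊨ φ` for epistemic variable structures, with the
perfect-recall style semantics: `K_i φ` holds at `w` iff `φ` holds at every
world of `𝓜` agreeing with `w` on the observable variables `O i`. -/
def EVS.sat (M : EVS ι α) (w : ι → Bool) : EForm ι α → Prop
  | .atom p => w p = true
  | .neg φ => ¬ M.sat w φ
  | .conj φ ψ => M.sat w φ ∧ M.sat w ψ
  | .know i φ => ∀ u ∈ M.A, (∀ x ∈ M.O i, u x = w x) → M.sat u φ

/-- Marginalization `𝓜 ↓ X` of an epistemic variable structure onto variables `X`. -/
def EVS.marg (M : EVS ι α) (X : Set ι) : EVS ι α where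
  V := M.V ∩ X
  A := {u | ∃ a ∈ M.A, ∀ x ∈ M.V ∩ X, u x = a x}
  O := fun i => M.O i ∩ X
  O_sub := fun i => Set.inter_subset_inter_left X (M.O_sub i)
  cyl := fun u v h hu => by
    obtain ⟨a, ha, hag⟩ := hu
    exact ⟨a, ha, fun x hx => (h x hx).symm.trans (hag x hx)⟩

/-- The variables occurring in a formula. -/
def EForm.vars : EForm ι α → Set ι
  | .atom p => {p}
  | .neg φ => φ.vars
  | .conj φ ψ => φ.vars ∪ ψ.vars
  | .know _ φ => φ.vars

/-- A formula is propositional if it contains no knowledge operators. -/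
def EForm.NoKnow : EForm ι α → Prop
  | .atom _ => True
  | .neg φ => φ.NoKnow
  | .conj φ ψ => φ.NoKnow ∧ ψ.NoKnow
  | .know _ _ => False

/-- `CondIndep A X Y Z`: the set of assignments `A` satisfies the discrete
conditional independency `X ⊥ Y | Z`. -/
def CondIndep (A : Set (ι → Bool)) (X Y Z : Set ι) : Prop :=
  ∀ u ∈ A, ∀ v ∈ A, (∀ z ∈ Z, u z = v z) →
    ∃ w ∈ A, (∀ x ∈ X ∪ Z, w x = u x) ∧ (∀ y ∈ Y ∪ Z, w y = v y)

/-- The set of subformulas of a formula. -/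
def EForm.subf : EForm ι α → Set (EForm ι α)
  | .atom p => {.atom p}
  | .neg φ => insert (.neg φ) φ.subf
  | .conj φ ψ => insert (.conj φ ψ) (φ.subf ∪ ψ.subf)
  | .know i φ => insert (.know i φ) φ.subf

lemma EForm.self_mem_subf (φ : EForm ι α) : φ ∈ φ.subf := by
  cases φ <;> simp [EForm.subf]

lemma EForm.subf_trans {φ ψ : EForm ι α} (h : ψ ∈ φ.subf) : ψ.subf ⊆ φ.subf := by
  induction φ with
  | atom p => simp [EForm.subf] at h; subst h; exact subset_rfl
  | neg χ ih =>
    simp only [EForm.subf, Set.mem_insert_iff] at h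
    rcases h with h | h
    · subst h; exact subset_rfl
    · exact (ih h).trans (Set.subset_insert _ _)
  | conj χ₁ χ₂ ih1 ih2 =>
    simp only [EForm.subf, Set.mem_insert_iff, Set.mem_union] at h
    rcases h with h | h | h
    · subst h; exact subset_rfl
    · exact (ih1 h).trans (Set.subset_union_left.trans (Set.subset_insert _ _))
    · exact (ih2 h).trans (Set.subset_union_right.trans (Set.subset_insert _ _))
  | know i χ ih =>
    simp only [EForm.subf, Set.mem_insert_iff] at h
    rcases h with h | h
    · subst h; exact subset_rfl
    · exact (ih h).trans (Set.subset_insert _ _)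

lemma EForm.neg_mem_subf {φ ψ : EForm ι α} (h : EForm.neg ψ ∈ φ.subf) : ψ ∈ φ.subf :=
  EForm.subf_trans h (by simp [EForm.subf, EForm.self_mem_subf])

lemma EForm.conjl_mem_subf {φ ψ χ : EForm ι α} (h : EForm.conj ψ χ ∈ φ.subf) : ψ ∈ φ.subf :=
  EForm.subf_trans h (by simp [EForm.subf, EForm.self_mem_subf])

lemma EForm.conjr_mem_subf {φ ψ χ : EForm ι α} (h : EForm.conj ψ χ ∈ φ.subf) : χ ∈ φ.subf :=
  EForm.subf_trans h (by simp [EForm.subf, EForm.self_mem_subf])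

lemma EForm.know_mem_subf {φ ψ : EForm ι α} {i : α} (h : EForm.know i ψ ∈ φ.subf) : ψ ∈ φ.subf :=
  EForm.subf_trans h (by simp [EForm.subf, EForm.self_mem_subf])


/-- Relevance-function preservation: if `κ` is a relevance function for `φ`
w.r.t. `𝓜` and `κ(φ) ⊆ X ⊆ V`, then for all worlds `w` of `𝓜`,
`𝓜, w ⊨ φ` iff `𝓜 ↓ X, w|X ⊨ φ`. -/
theorem relevance_preservation (M : EVS ι α) (φ : EForm ι α)
    (κ : EForm ι α → Set ι)
    (hsub : ∀ ψ ∈ φ.subf, κ ψ ⊆ M.V)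
    (hatom : ∀ p : ι, EForm.atom (α := α) p ∈ φ.subf → κ (.atom p) = {p})
    (hconj : ∀ ψ χ : EForm ι α, EForm.conj ψ χ ∈ φ.subf →
      κ (.conj ψ χ) = κ ψ ∪ κ χ)
    (hneg : ∀ ψ : EForm ι α, EForm.neg ψ ∈ φ.subf → κ (.neg ψ) = κ ψ)
    (hknow : ∀ (i : α) (ψ : EForm ι α), EForm.know i ψ ∈ φ.subf →
      ∃ U ⊆ M.O i, κ (.know i ψ) = U ∪ κ ψ ∧ κ ψ ∩ M.O i ⊆ U ∧
        CondIndep M.A (κ ψ \ U) (M.O i \ U) U)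
    (X : Set ι) (hκX : κ φ ⊆ X) (hXV : X ⊆ M.V)
    (w : ι → Bool) (hw : w ∈ M.A) :
    M.sat w φ ↔ (M.marg X).sat w φ := by
  -- Step 1: satisfaction of a subformula ψ depends only on the values on κ ψ.
  have key1 : ∀ ψ : EForm ι α, ψ ∈ φ.subf → ∀ u ∈ M.A, ∀ v ∈ M.A,
      (∀ x ∈ κ ψ, u x = v x) → (M.sat u ψ ↔ M.sat v ψ) := by
    intro ψ
    induction ψ with
    | atom p =>
      intro hmem u hu v hv hag
      have hp : u p = v p := hag p (by rw [hatom p hmem]; rfl)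
      simp [EVS.sat, hp]
    | neg χ ih =>
      intro hmem u hu v hv hag
      have hag' : ∀ x ∈ κ χ, u x = v x := fun x hx => hag x (by rw [hneg χ hmem]; exact hx)
      simp only [EVS.sat]
      exact not_congr (ih (EForm.neg_mem_subf hmem) u hu v hv hag')
    | conj χ₁ χ₂ ih1 ih2 =>
      intro hmem u hu v hv hag
      have hag1 : ∀ x ∈ κ χ₁, u x = v x := fun x hx =>
        hag x (by rw [hconj χ₁ χ₂ hmem]; exact Or.inl hx)
      have hag2 : ∀ x ∈ κ χ₂, u x = v x := fun x hx =>
        hag x (by rw [hconj χ₁ χ₂ hmem]; exact Or.inr hx)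
      simp only [EVS.sat]
      exact and_congr (ih1 (EForm.conjl_mem_subf hmem) u hu v hv hag1)
        (ih2 (EForm.conjr_mem_subf hmem) u hu v hv hag2)
    | know i χ ih =>
      intro hmem u hu v hv hag
      obtain ⟨U, hUO, hκ, hκU, hCI⟩ := hknow i χ hmem
      have hχmem : χ ∈ φ.subf := EForm.know_mem_subf hmem
      have fwd : ∀ u ∈ M.A, ∀ v ∈ M.A, (∀ x ∈ κ (EForm.know i χ), u x = v x) →
          M.sat u (EForm.know i χ) → M.sat v (EForm.know i χ) := by
        intro u hu v hv hag hs a ha haO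
        have hagU : ∀ x ∈ U, u x = v x := fun x hx => hag x (by rw [hκ]; exact Or.inl hx)
        have haU : ∀ x ∈ U, a x = u x := fun x hx =>
          (haO x (hUO hx)).trans (hagU x hx).symm
        obtain ⟨b, hb, hb1, hb2⟩ := hCI a ha u hu haU
        have hbO : ∀ x ∈ M.O i, b x = u x := by
          intro x hx
          by_cases hxU : x ∈ U
          · exact hb2 x (Or.inr hxU)
          · exact hb2 x (Or.inl ⟨hx, hxU⟩)
        have hsb := hs b hb hbO
        have hba : ∀ x ∈ κ χ, b x = a x := by
          intro x hx
          by_cases hxU : x ∈ U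
          · exact hb1 x (Or.inr hxU)
          · exact hb1 x (Or.inl ⟨hx, hxU⟩)
        exact (ih hχmem b hb a ha hba).mp hsb
      exact ⟨fwd u hu v hv hag, fwd v hv u hu (fun x hx => (hag x hx).symm)⟩
  -- Step 2: main induction.
  have key2 : ∀ ψ : EForm ι α, ψ ∈ φ.subf → κ ψ ⊆ X → ∀ w ∈ M.A, ∀ w' : ι → Bool,
      (∀ x ∈ X, w' x = w x) → (M.sat w ψ ↔ (M.marg X).sat w' ψ) := by
    intro ψ
    induction ψ with
    | atom p =>
      intro hmem hκψ w hw w' hww'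
      have hpX : p ∈ X := hκψ (by rw [hatom p hmem]; rfl)
      simp [EVS.sat, hww' p hpX]
    | neg χ ih =>
      intro hmem hκψ w hw w' hww'
      have hκχ : κ χ ⊆ X := fun x hx => hκψ (by rw [hneg χ hmem]; exact hx)
      simp only [EVS.sat]
      exact not_congr (ih (EForm.neg_mem_subf hmem) hκχ w hw w' hww')
    | conj χ₁ χ₂ ih1 ih2 =>
      intro hmem hκψ w hw w' hww'
      have hκ1 : κ χ₁ ⊆ X := fun x hx => hκψ (by rw [hconj χ₁ χ₂ hmem]; exact Or.inl hx)
      have hκ2 : κ χ₂ ⊆ X := fun x hx => hκψ (by rw [hconj χ₁ χ₂ hmem]; exact Or.inr hx)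
      simp only [EVS.sat]
      exact and_congr (ih1 (EForm.conjl_mem_subf hmem) hκ1 w hw w' hww')
        (ih2 (EForm.conjr_mem_subf hmem) hκ2 w hw w' hww')
    | know i χ ih =>
      intro hmem hκψ w hw w' hww'
      obtain ⟨U, hUO, hκ, hκU, hCI⟩ := hknow i χ hmem
      have hχmem : χ ∈ φ.subf := EForm.know_mem_subf hmem
      have hκχX : κ χ ⊆ X := fun x hx => hκψ (by rw [hκ]; exact Or.inr hx)
      have hUX : U ⊆ X := fun x hx => hκψ (by rw [hκ]; exact Or.inl hx)
      constructor
      · intro hs u' hu' hu'O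
        obtain ⟨a, ha, hua⟩ := hu'
        have hu'X : ∀ x ∈ X, u' x = a x := fun x hx => hua x ⟨hXV hx, hx⟩
        -- a agrees with w on U
        have haw : ∀ x ∈ U, a x = w x := by
          intro x hx
          have hxX : x ∈ X := hUX hx
          have h1 : u' x = w' x := hu'O x ⟨hUO hx, hxX⟩
          have := (hu'X x hxX).symm.trans (h1.trans (hww' x hxX))
          exact this
        obtain ⟨b, hb, hb1, hb2⟩ := hCI a ha w hw haw
        have hbO : ∀ x ∈ M.O i, b x = w x := by
          intro x hx
          by_cases hxU : x ∈ U
          · exact hb2 x (Or.inr hxU)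
          · exact hb2 x (Or.inl ⟨hx, hxU⟩)
        have hsb := hs b hb hbO
        have hba : ∀ x ∈ κ χ, b x = a x := by
          intro x hx
          by_cases hxU : x ∈ U
          · exact hb1 x (Or.inr hxU)
          · exact hb1 x (Or.inl ⟨hx, hxU⟩)
        have hsa := (key1 χ hχmem b hb a ha hba).mp hsb
        exact (ih hχmem hκχX a ha u' hu'X).mp hsa
      · intro hs u hu huO
        have huM : u ∈ (M.marg X).A := ⟨u, hu, fun _ _ => rfl⟩
        have huO' : ∀ x ∈ (M.marg X).O i, u x = w' x := by
          intro x hx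
          exact (huO x hx.1).trans (hww' x hx.2).symm
        have := hs u huM huO'
        exact (ih hχmem hκχX u hu u (fun _ _ => rfl)).mpr this
  exact key2 φ (EForm.self_mem_subf φ) hκX w hw w (fun _ _ => rfl)
end

section
/- Knowledge is preserved by observable-variable redundancy: let 𝓜 = (A, O, V) be an epistemic variable structure, i an agent, and U ⊆ O_i a set with A ⊨ (S \ U) ⊥ (O_i \ U) | U for some set S ⊆ V with S ∩ O_i ⊆ U. Then for any propositional formula φ with vars(φ) ⊆ S, and any world w ∈ A: 𝓜, w ⊨ K_i φ iff for all u ∈ A with u|U = w|U, 𝓜, u ⊨ φ. That is, conditioning on the smaller set U of observables suffices to compute agent i's knowledge of φ. -/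
variable {ι α : Type*}

theorem sat_congr (M : EVS ι α) {φ : EForm ι α} (hprop : φ.NoKnow)
    {u v : ι → Bool} (h : ∀ x ∈ φ.vars, u x = v x) :
    M.sat u φ ↔ M.sat v φ := by
  induction φ with
  | atom p => simp [EVS.sat, h p (by simp [EForm.vars])]
  | neg φ ih => exact not_congr (ih hprop h)
  | conj φ ψ ih1 ih2 =>
      exact and_congr (ih1 hprop.1 fun x hx => h x (Or.inl hx))
        (ih2 hprop.2 fun x hx => h x (Or.inr hx))
  | know _ _ _ => exact hprop.elim

/-- Knowledge is preserved under observable-variable redundancy: if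
`U ⊆ O_i`, `S ∩ O_i ⊆ U`, and `A ⊨ (S \ U) ⊥ (O_i \ U) | U`, then for any
propositional formula `φ` with `vars(φ) ⊆ S` and any world `w` of `𝓜`,
agent `i` knows `φ` at `w` iff `φ` holds at every world agreeing with `w`
on the smaller set `U`. -/
theorem knowledge_via_redundancy (M : EVS ι α) (i : α)
    (U S : Set ι) (hU : U ⊆ M.O i) (hS : S ⊆ M.V) (hSO : S ∩ M.O i ⊆ U)
    (hCI : CondIndep M.A (S \ U) (M.O i \ U) U)
    (φ : EForm ι α) (hprop : φ.NoKnow) (hvars : φ.vars ⊆ S)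
    (w : ι → Bool) (hw : w ∈ M.A) :
    M.sat w (.know i φ) ↔
      ∀ u ∈ M.A, (∀ x ∈ U, u x = w x) → M.sat u φ := by
  constructor
  · intro hK u hu huw
    obtain ⟨t, ht, htu, htw⟩ := hCI u hu w hw huw
    have hsat : M.sat t φ := hK t ht (fun x hx => by
      by_cases hxU : x ∈ U
      · exact htw x (Or.inr hxU)
      · exact htw x (Or.inl ⟨hx, hxU⟩))
    exact (sat_congr M hprop (fun x hx => by
      by_cases hxU : x ∈ U
      · exact htu x (Or.inr hxU)
      · exact htu x (Or.inl ⟨hvars hx, hxU⟩))).mp hsat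
  · intro h u hu huw
    exact h u hu fun x hx => huw x (hU hx)
end

section
/- Nonemptiness of structured relational models: if M = (V, E, 𝒮) is a structured relational model with (V,E) a finite dag, then the combined relation ⊗𝒮 is nonempty; i.e., there exists at least one global assignment α : V → Bool consistent with every local relation s_v. -/
/-- A structured relational model: a finite dag `(V, E)` together with a local
relational structure `s v` for each node `v ∈ V`, whose domain is `v` together
with its parents, and which does not constrain its parents. -/
structure StructModel (ι : Type*) where
  V : Finset ι
  E : ι → ι → Prop
  s : ι → RelStr ι
  acyclic : ∀ v, ¬ Relation.TransGen E v v
  edge_mem : ∀ u v, E u v → u ∈ V ∧ v ∈ V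
  dom_eq : ∀ v ∈ V, (s v).dom = insert v {u | E u v}
  no_constrain : ∀ v ∈ V, (s v).marg {u | E u v} = RelStr.full {u | E u v}

/-- The combined relation `⊗𝒮` of a structured model. -/
noncomputable def StructModel.combined {ι : Type*} (M : StructModel ι) : RelStr ι :=
  RelStr.bigComb (M.V.toList.map M.s)


/-!
Finiteness and acyclicity make the parent relation well-founded, so a global assignment can be
built by recursion from the roots: at a node `v`, extend the values already chosen on the parents
of `v` to a member of `s_v` (possible because `s_v` does not constrain the parents) and keep its
value at `v`. As `s_v` only depends on `v` and its parents, the result lies in every `s_v`.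
-/

theorem WellFounded.of_transGen_irrefl_of_finite {α : Type*} {r : α → α → Prop} {s : Set α}
    (hs : s.Finite) (hr : ∀ a b, r a b → a ∈ s ∧ b ∈ s)
    (hirr : ∀ a, ¬Relation.TransGen r a a) :
    WellFounded r := by
  have : IsStrictOrder α (Relation.TransGen r) :=
    { irrefl := hirr, trans := fun _ _ _ => Relation.TransGen.trans }
  have hwf := Set.wellFoundedOn_iff.mp (hs.wellFoundedOn (r := Relation.TransGen r))
  exact Subrelation.wf (fun h => ⟨Relation.TransGen.single h, hr _ _ h⟩) hwf

theorem exists_forall_mem_of_wellFounded {ι β : Type*} [Nonempty β] {r : ι → ι → Prop}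
    (hr : WellFounded r) (V : Set ι) (S : ι → Set (ι → β))
    (hlocal : ∀ v ∈ V, ∀ a ∈ S v, ∀ b : ι → β,
      b v = a v → (∀ u, r u v → b u = a u) → b ∈ S v)
    (hextend : ∀ v ∈ V, ∀ g : ∀ u, r u v → β, ∃ a ∈ S v, ∀ u (h : r u v), a u = g u h) :
    ∃ x : ι → β, ∀ v ∈ V, x ∈ S v := by
  classical
  choose ext hext_mem hext_eq using hextend
  let x : ι → β := hr.fix fun v rec =>
    if hv : v ∈ V then ext v hv rec v else Classical.arbitrary β
  have hx : ∀ v (hv : v ∈ V), x v = ext v hv (fun u _ => x u) v := fun v hv =>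
    (hr.fix_eq _ v).trans (dif_pos hv)
  exact ⟨x, fun v hv => hlocal v hv _ (hext_mem v hv _) x (hx v hv)
    fun u h => (hext_eq v hv (fun u _ => x u) u h).symm⟩

namespace RelStr

variable {ι : Type*}

theorem mem_bigComb {l : List (RelStr ι)} {u : ι → Bool} :
    u ∈ (bigComb l).A ↔ ∀ s ∈ l, u ∈ s.A := by
  induction l with
  | nil => simp [bigComb, full]
  | cons s l ih => simp [bigComb, comb, ← ih]

theorem exists_mem_eqOn_of_marg_eq_full {s : RelStr ι} {X : Set ι} (h : s.marg X = full X)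
    (g : ι → Bool) : ∃ a ∈ s.A, ∀ x ∈ s.dom ∩ X, g x = a x := by
  have hg : g ∈ (s.marg X).A := by rw [h]; trivial
  exact hg

end RelStr

namespace StructModel

variable {ι : Type*} (M : StructModel ι)

theorem wellFounded : WellFounded M.E :=
  .of_transGen_irrefl_of_finite M.V.finite_toSet M.edge_mem M.acyclic

theorem mem_combined {u : ι → Bool} : u ∈ M.combined.A ↔ ∀ v ∈ M.V, u ∈ (M.s v).A := by
  simp [combined, RelStr.mem_bigComb]

theorem mem_s_of_eq_of_parents {v : ι} (hv : v ∈ M.V) {a b : ι → Bool} (ha : a ∈ (M.s v).A)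
    (hbv : b v = a v) (hbu : ∀ u, M.E u v → b u = a u) : b ∈ (M.s v).A := by
  refine (M.s v).cyl a b (fun x hx => ?_) ha
  rw [M.dom_eq v hv] at hx
  rcases hx with rfl | hx
  exacts [hbv.symm, (hbu x hx).symm]

theorem exists_mem_s_extending_parents {v : ι} (hv : v ∈ M.V) (g : ∀ u, M.E u v → Bool) :
    ∃ a ∈ (M.s v).A, ∀ u (h : M.E u v), a u = g u h := by
  classical
  obtain ⟨a, ha, hag⟩ := RelStr.exists_mem_eqOn_of_marg_eq_full (M.no_constrain v hv)
    fun u => if h : M.E u v then g u h else false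
  refine ⟨a, ha, fun u h => ?_⟩
  have hu := hag u ⟨by rw [M.dom_eq v hv]; exact Or.inr h, h⟩
  rw [dif_pos h] at hu
  exact hu.symm

end StructModel

/-- Nonemptiness of structured relational models: there is at least one global
assignment consistent with every local relation. -/
theorem structModel_nonempty {ι : Type*} (M : StructModel ι) :
    M.combined.A.Nonempty := by
  obtain ⟨x, hx⟩ := exists_forall_mem_of_wellFounded M.wellFounded M.V (fun v => (M.s v).A)
    (fun _ hv _ ha _ => M.mem_s_of_eq_of_parents hv ha)
    (fun _ hv => M.exists_mem_s_extending_parents hv)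
  exact ⟨x, M.mem_combined.mpr hx⟩
end
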